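/- arXiv:2109.07638 — 2 statements merged into one kernel-verified Lean document; each statement's English description precedes it below -/
import Mathlib

section
/- If the coefficient matrices of a linear matrix expression M(y) = M0 + M1*y1 + ... + Mk*yk satisfy supp(M0)·supp(M0) ≤ supp(M0), supp(M0)·supp(Mj) ≤ supp(Mj) and supp(Mj)·supp(M0) ≤ supp(Mj) for all j, and supp(Mj)·supp(Ml) = 0 for all j,l ≥ 1, then for every n ≥ 1 the n-th power M(y)^n is again a linear matrix expression in y (i.e., it contains no terms of degree 2 or higher in the variables y1,...,yk). -/
open Matrix

/-- Boolean support of a real matrix. -/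
noncomputable def supp {n : ℕ} (M : Matrix (Fin n) (Fin n) ℝ) : Matrix (Fin n) (Fin n) Bool :=
  fun i j => decide (M i j ≠ 0)

/-- Boolean matrix product (conjunction for products, disjunction for sums). -/
def bmul {n : ℕ} (A B : Matrix (Fin n) (Fin n) Bool) : Matrix (Fin n) (Fin n) Bool :=
  fun i j => decide (∃ l, A i l = true ∧ B l j = true)

/-- Sub-support relation: `ble A B` iff `B i j = 0 → A i j = 0`. -/
def ble {n : ℕ} (A B : Matrix (Fin n) (Fin n) Bool) : Prop :=
  ∀ i j, B i j = false → A i j = false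

lemma supp_false_iff {n : ℕ} (A : Matrix (Fin n) (Fin n) ℝ) (i j : Fin n) :
    supp A i j = false ↔ A i j = 0 := by
  simp [supp]

lemma supp_true_of_ne {n : ℕ} {A : Matrix (Fin n) (Fin n) ℝ} {i j : Fin n}
    (h : A i j ≠ 0) : supp A i j = true := by
  simp [supp, h]

lemma ble_true {n : ℕ} {A B : Matrix (Fin n) (Fin n) Bool} (h : ble A B)
    {i j : Fin n} (hA : A i j = true) : B i j = true := by
  by_contra hb
  rw [Bool.not_eq_true] at hb
  rw [h i j hb] at hA
  exact Bool.false_ne_true hA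

lemma ble_refl {n : ℕ} (A : Matrix (Fin n) (Fin n) Bool) : ble A A := fun _ _ h => h

/-- If supports are dominated and the boolean product of dominators is zero, the real
product is zero. -/
lemma mul_eq_zero_of_supp {n : ℕ} {A B : Matrix (Fin n) (Fin n) ℝ}
    {X Y : Matrix (Fin n) (Fin n) Bool}
    (hA : ble (supp A) X) (hB : ble (supp B) Y)
    (hXY : bmul X Y = fun _ _ => false) : A * B = 0 := by
  ext i j
  rw [Matrix.mul_apply]
  simp only [Matrix.zero_apply]
  apply Finset.sum_eq_zero
  intro l _
  by_cases hAl : A i l = 0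
  · simp [hAl]
  by_cases hBl : B l j = 0
  · simp [hBl]
  exfalso
  have hX : X i l = true := ble_true hA (supp_true_of_ne hAl)
  have hY : Y l j = true := ble_true hB (supp_true_of_ne hBl)
  have h := congrFun (congrFun hXY i) j
  simp only [bmul, decide_eq_false_iff_not, not_exists] at h
  exact h l ⟨hX, hY⟩

/-- Support of a product is dominated via dominators of the factors. -/
lemma supp_mul_ble {n : ℕ} {A B : Matrix (Fin n) (Fin n) ℝ}
    {X Y Z : Matrix (Fin n) (Fin n) Bool}
    (hA : ble (supp A) X) (hB : ble (supp B) Y)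
    (hXY : ble (bmul X Y) Z) : ble (supp (A * B)) Z := by
  intro i j hz
  rw [supp_false_iff, Matrix.mul_apply]
  apply Finset.sum_eq_zero
  intro l _
  by_cases hAl : A i l = 0
  · simp [hAl]
  by_cases hBl : B l j = 0
  · simp [hBl]
  exfalso
  have hX : X i l = true := ble_true hA (supp_true_of_ne hAl)
  have hY : Y l j = true := ble_true hB (supp_true_of_ne hBl)
  have hb : bmul X Y i j = false := hXY i j hz
  simp only [bmul, decide_eq_false_iff_not, not_exists] at hb
  exact hb l ⟨hX, hY⟩

lemma supp_add_ble {n : ℕ} {A B : Matrix (Fin n) (Fin n) ℝ}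
    {X : Matrix (Fin n) (Fin n) Bool}
    (hA : ble (supp A) X) (hB : ble (supp B) X) : ble (supp (A + B)) X := by
  intro i j hz
  rw [supp_false_iff]
  have hA' := (supp_false_iff A i j).mp (hA i j hz)
  have hB' := (supp_false_iff B i j).mp (hB i j hz)
  simp [Matrix.add_apply, hA', hB']

theorem lme_closed_under_powers {n k : ℕ}
    (M0 : Matrix (Fin n) (Fin n) ℝ) (M : Fin k → Matrix (Fin n) (Fin n) ℝ)
    (h0 : ble (bmul (supp M0) (supp M0)) (supp M0))
    (h1 : ∀ j, ble (bmul (supp M0) (supp (M j))) (supp (M j)))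
    (h2 : ∀ j, ble (bmul (supp (M j)) (supp M0)) (supp (M j)))
    (h3 : ∀ j l, bmul (supp (M j)) (supp (M l)) = fun _ _ => false) :
    ∀ m : ℕ, 1 ≤ m →
      ∃ (N0 : Matrix (Fin n) (Fin n) ℝ) (N : Fin k → Matrix (Fin n) (Fin n) ℝ),
        ∀ γ : Fin k → ℝ, (M0 + ∑ j, γ j • M j) ^ m = N0 + ∑ j, γ j • N j := by
  -- strengthened statement with support invariants
  have key : ∀ m : ℕ, 1 ≤ m →
      ∃ (N0 : Matrix (Fin n) (Fin n) ℝ) (N : Fin k → Matrix (Fin n) (Fin n) ℝ),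
        ble (supp N0) (supp M0) ∧ (∀ j, ble (supp (N j)) (supp (M j))) ∧
        ∀ γ : Fin k → ℝ, (M0 + ∑ j, γ j • M j) ^ m = N0 + ∑ j, γ j • N j := by
    intro m hm
    induction m, hm using Nat.le_induction with
    | base =>
      exact ⟨M0, M, ble_refl _, fun j => ble_refl _, fun γ => by rw [pow_one]⟩
    | succ m hm ih =>
      obtain ⟨N0, N, hN0, hN, hEq⟩ := ih
      refine ⟨N0 * M0, fun j => N0 * M j + N j * M0, ?_, ?_, ?_⟩
      · exact supp_mul_ble hN0 (ble_refl _) h0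
      · intro j
        exact supp_add_ble (supp_mul_ble hN0 (ble_refl _) (h1 j))
          (supp_mul_ble (hN j) (ble_refl _) (h2 j))
      · intro γ
        have hcross : (∑ j, γ j • N j) * (∑ l, γ l • M l) = 0 := by
          rw [Finset.sum_mul]
          apply Finset.sum_eq_zero
          intro j _
          rw [Matrix.mul_sum]
          apply Finset.sum_eq_zero
          intro l _
          rw [Matrix.smul_mul, Matrix.mul_smul,
            mul_eq_zero_of_supp (hN j) (ble_refl _) (h3 j l), smul_zero, smul_zero]
        rw [pow_succ, hEq γ, add_mul, mul_add, mul_add, hcross, add_zero]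
        rw [Matrix.sum_mul]
        have : (∑ j, γ j • N j * M0) + N0 * ∑ j, γ j • M j
            = ∑ j, γ j • (N0 * M j + N j * M0) := by
          rw [Matrix.mul_sum]
          rw [← Finset.sum_add_distrib]
          apply Finset.sum_congr rfl
          intro j _
          rw [smul_add, Matrix.smul_mul, Matrix.mul_smul]
          abel
        rw [add_assoc, add_comm (N0 * ∑ j, γ j • M j), this]
  intro m hm
  obtain ⟨N0, N, _, _, hEq⟩ := key m hm
  exact ⟨N0, N, hEq⟩
end

section
/- Let Λ(γ) = M0 + Σj Mj*γj be an LME closed under multiplication (satisfying the support conditions). Then for any two valuations γ1, γ2 ∈ ℝ^k and any β ∈ [0,1], exp(Λ(β·γ1 + (1−β)·γ2)) = β·exp(Λ(γ1)) + (1−β)·exp(Λ(γ2)). -/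
open Matrix

/-!
Let `N` be the space of matrices supported where some `M j` is nonzero. The support conditions
say exactly that `M0 * N ⊆ N`, `N * M0 ⊆ N` and `N * N = 0`. Hence `(M0 + x) ^ m - M0 ^ m ∈ N`
for `x ∈ N`, so the difference of two such powers is annihilated by `N`, and an induction on `m`
shows that `x ↦ (M0 + x) ^ m` is affine on `N`. Summing the exponential series, so is
`x ↦ exp (M0 + x)`.
-/

section SquareZeroPerturbation

variable {R A : Type*} [CommRing R] [Ring A] [Algebra R A] {N : Submodule R A} {a : A}

theorem pow_mul_mem_of_mul_mem (hl : ∀ x ∈ N, a * x ∈ N) (m : ℕ) {x : A} (hx : x ∈ N) :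
    a ^ m * x ∈ N := by
  induction m with
  | zero => simpa using hx
  | succ m ih => simpa only [pow_succ', mul_assoc] using hl _ ih

theorem add_pow_sub_pow_mem (hl : ∀ x ∈ N, a * x ∈ N) (hr : ∀ x ∈ N, x * a ∈ N)
    (hsq : ∀ x ∈ N, ∀ y ∈ N, x * y = 0) {x : A} (hx : x ∈ N) (m : ℕ) :
    (a + x) ^ m - a ^ m ∈ N := by
  induction m with
  | zero => simp
  | succ m ih =>
    set D := (a + x) ^ m - a ^ m
    have hexpand : (a + x) ^ (m + 1) - a ^ (m + 1) = D * a + a ^ m * x + D * x := by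
      have hP : (a + x) ^ m = a ^ m + D := (add_sub_cancel _ _).symm
      rw [pow_succ, pow_succ, hP]
      noncomm_ring
    rw [hexpand, hsq D ih x hx, add_zero]
    exact N.add_mem (hr D ih) (pow_mul_mem_of_mul_mem hl m hx)

theorem add_pow_smul_add_smul (hl : ∀ x ∈ N, a * x ∈ N) (hr : ∀ x ∈ N, x * a ∈ N)
    (hsq : ∀ x ∈ N, ∀ y ∈ N, x * y = 0) {x y : A} (hx : x ∈ N) (hy : y ∈ N) (β : R)
    (m : ℕ) :
    (a + (β • x + (1 - β) • y)) ^ m = β • (a + x) ^ m + (1 - β) • (a + y) ^ m := by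
  induction m with
  | zero => simp [← add_smul]
  | succ m ih =>
    set P := (a + x) ^ m
    set Q := (a + y) ^ m
    have hPQ : (P - Q) * (x - y) = 0 := by
      simpa only [sub_sub_sub_cancel_right] using hsq _
        (N.sub_mem (add_pow_sub_pow_mem hl hr hsq hx m) (add_pow_sub_pow_mem hl hr hsq hy m))
        _ (N.sub_mem hx hy)
    rw [sub_mul, mul_sub, mul_sub] at hPQ
    rw [pow_succ, pow_succ, pow_succ, ih]
    simp only [mul_add, add_mul, smul_mul_assoc, mul_smul_comm]
    linear_combination (norm := module) (β * (β - 1)) • hPQ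

end SquareZeroPerturbation

theorem NormedSpace.exp_eq_smul_add_smul_of_pow {𝕂 A : Type*} [RCLike 𝕂] [NormedRing A]
    [NormedAlgebra 𝕂 A] [CompleteSpace A] {x y z : A} (β : 𝕂)
    (h : ∀ m : ℕ, z ^ m = β • x ^ m + (1 - β) • y ^ m) :
    NormedSpace.exp z = β • NormedSpace.exp x + (1 - β) • NormedSpace.exp y := by
  have hsum := ((exp_series_hasSum_exp' (𝕂 := 𝕂) x).const_smul β).add
    ((exp_series_hasSum_exp' (𝕂 := 𝕂) y).const_smul (1 - β))
  refine (exp_series_hasSum_exp' (𝕂 := 𝕂) z).unique (hsum.congr_fun fun m => ?_)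
  simp only [h, smul_add, smul_comm β, smul_comm (1 - β)]

namespace Matrix

variable {m R : Type*} [Semiring R] {S : Set (m × m)} {A B : Matrix m m R}

variable (R) in
def supportedOn (S : Set (m × m)) : Submodule R (Matrix m m R) where
  carrier := {A | ∀ i j, A i j ≠ 0 → (i, j) ∈ S}
  add_mem' {A B} hA hB i j h := by
    by_cases hAij : A i j = 0
    · exact hB i j (by simpa [hAij] using h)
    · exact hA i j hAij
  zero_mem' i j h := absurd rfl h
  smul_mem' c A hA i j h := hA i j (right_ne_zero_of_mul h)

theorem mem_supportedOn : A ∈ supportedOn R S ↔ ∀ i j, A i j ≠ 0 → (i, j) ∈ S := Iff.rfl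

variable [Fintype m]

theorem mul_mem_supportedOn_left (hS : ∀ i l p, B i l ≠ 0 → (l, p) ∈ S → (i, p) ∈ S)
    (hA : A ∈ supportedOn R S) : B * A ∈ supportedOn R S := by
  intro i p h
  obtain ⟨l, -, hl⟩ := Finset.exists_ne_zero_of_sum_ne_zero h
  exact hS i l p (left_ne_zero_of_mul hl) (hA l p (right_ne_zero_of_mul hl))

theorem mul_mem_supportedOn_right (hS : ∀ i l p, (i, l) ∈ S → B l p ≠ 0 → (i, p) ∈ S)
    (hA : A ∈ supportedOn R S) : A * B ∈ supportedOn R S := by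
  intro i p h
  obtain ⟨l, -, hl⟩ := Finset.exists_ne_zero_of_sum_ne_zero h
  exact hS i l p (hA i l (left_ne_zero_of_mul hl)) (right_ne_zero_of_mul hl)

theorem mul_eq_zero_of_mem_supportedOn (hS : ∀ i l p, (i, l) ∈ S → (l, p) ∉ S)
    (hA : A ∈ supportedOn R S) (hB : B ∈ supportedOn R S) : A * B = 0 := by
  ext i p
  refine Finset.sum_eq_zero fun l _ => ?_
  by_contra h
  exact hS i l p (hA i l (left_ne_zero_of_mul h)) (hB l p (right_ne_zero_of_mul h))

end Matrix

theorem ble_bmul_supp_iff {n : ℕ} {A B C : Matrix (Fin n) (Fin n) ℝ} :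
    ble (bmul (supp A) (supp B)) (supp C) ↔
      ∀ i l p, A i l ≠ 0 → B l p ≠ 0 → C i p ≠ 0 := by
  simp only [ble, bmul, supp, decide_eq_false_iff_not, decide_eq_true_eq, not_exists, not_and,
    not_not]
  exact ⟨fun h i l p hA hB hC => hB (h i p hC l hA),
    fun h i p hC l hA => not_not.1 fun hB => h i l p hA hB hC⟩

theorem bmul_supp_eq_false_iff {n : ℕ} {A B : Matrix (Fin n) (Fin n) ℝ} :
    (bmul (supp A) (supp B) = fun _ _ => false) ↔ ∀ i l p, A i l ≠ 0 → B l p = 0 := by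
  refine ⟨fun h i l p hA => ?_, fun h => Matrix.ext fun i p => ?_⟩
  · have hip := congrFun (congrFun h i) p
    simp only [bmul, supp, decide_eq_false_iff_not, decide_eq_true_eq, not_exists, not_and,
      not_not] at hip
    exact hip l hA
  · simp only [bmul, supp, decide_eq_false_iff_not, decide_eq_true_eq, not_exists, not_and,
      not_not]
    exact fun l => h i l p

theorem exp_of_closed_lme_convex_combination_general {n k : ℕ}
    (M0 : Matrix (Fin n) (Fin n) ℝ) (M : Fin k → Matrix (Fin n) (Fin n) ℝ)
    (h1 : ∀ j, ble (bmul (supp M0) (supp (M j))) (supp (M j)))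
    (h2 : ∀ j, ble (bmul (supp (M j)) (supp M0)) (supp (M j)))
    (h3 : ∀ j l, bmul (supp (M j)) (supp (M l)) = fun _ _ => false)
    (γ₁ γ₂ : Fin k → ℝ) (β : ℝ) :
    NormedSpace.exp (M0 + ∑ j, (β * γ₁ j + (1 - β) * γ₂ j) • M j)
      = β • NormedSpace.exp (M0 + ∑ j, γ₁ j • M j)
        + (1 - β) • NormedSpace.exp (M0 + ∑ j, γ₂ j • M j) := by
  let S : Set (Fin n × Fin n) := {q | ∃ j, M j q.1 q.2 ≠ 0}
  let N := supportedOn ℝ S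
  have hl : ∀ X ∈ N, M0 * X ∈ N := fun X =>
    mul_mem_supportedOn_left fun i l p h0 ⟨j, hj⟩ =>
      ⟨j, ble_bmul_supp_iff.1 (h1 j) i l p h0 hj⟩
  have hr : ∀ X ∈ N, X * M0 ∈ N := fun X =>
    mul_mem_supportedOn_right fun i l p ⟨j, hj⟩ h0 =>
      ⟨j, ble_bmul_supp_iff.1 (h2 j) i l p hj h0⟩
  have hsq : ∀ X ∈ N, ∀ Y ∈ N, X * Y = 0 := fun X hX Y hY =>
    mul_eq_zero_of_mem_supportedOn (S := S)
      (fun i l p ⟨j, hj⟩ ⟨j', hj'⟩ => hj' (bmul_supp_eq_false_iff.1 (h3 j j') i l p hj)) hX hY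
  have hcomb : ∀ c : Fin k → ℝ, ∑ j, c j • M j ∈ N := fun c =>
    N.sum_mem fun j _ => N.smul_mem (c j) (mem_supportedOn.2 fun i p h => ⟨j, h⟩)
  have hsplit : ∑ j, (β * γ₁ j + (1 - β) * γ₂ j) • M j
      = β • ∑ j, γ₁ j • M j + (1 - β) • ∑ j, γ₂ j • M j := by
    simp only [Finset.smul_sum, ← Finset.sum_add_distrib, add_smul, smul_smul]
  -- `exp` depends only on the topology, so any submultiplicative norm will do
  let _ : NormedRing (Matrix (Fin n) (Fin n) ℝ) := Matrix.linftyOpNormedRing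
  let _ : NormedAlgebra ℝ (Matrix (Fin n) (Fin n) ℝ) := Matrix.linftyOpNormedAlgebra
  rw [hsplit]
  exact NormedSpace.exp_eq_smul_add_smul_of_pow β
    (add_pow_smul_add_smul hl hr hsq (hcomb γ₁) (hcomb γ₂) β)

theorem exp_of_closed_lme_convex_combination {n k : ℕ}
    (M0 : Matrix (Fin n) (Fin n) ℝ) (M : Fin k → Matrix (Fin n) (Fin n) ℝ)
    (h0 : ble (bmul (supp M0) (supp M0)) (supp M0))
    (h1 : ∀ j, ble (bmul (supp M0) (supp (M j))) (supp (M j)))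
    (h2 : ∀ j, ble (bmul (supp (M j)) (supp M0)) (supp (M j)))
    (h3 : ∀ j l, bmul (supp (M j)) (supp (M l)) = fun _ _ => false)
    (γ₁ γ₂ : Fin k → ℝ) (β : ℝ) (hβ : β ∈ Set.Icc (0:ℝ) 1) :
    NormedSpace.exp (M0 + ∑ j, (β * γ₁ j + (1 - β) * γ₂ j) • M j)
      = β • NormedSpace.exp (M0 + ∑ j, γ₁ j • M j)
        + (1 - β) • NormedSpace.exp (M0 + ∑ j, γ₂ j • M j) :=
  exp_of_closed_lme_convex_combination_general M0 M h1 h2 h3 γ₁ γ₂ β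
end
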